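/- arXiv:1805.09044 — 3 statements merged into one kernel-verified Lean document; each statement's English description precedes it below -/
import Mathlib

section
/- Let V_IS(μ̂) = (1/n) Σ_{i=1}^n [∏_{t=0}^{H-1} π_t^{(i)}/μ̂_t^{(i)}] R^{(i)} and V_IS(μ) = (1/n) Σ_{i=1}^n [∏_{t=0}^{H-1} π_t^{(i)}/μ_t^{(i)}] R^{(i)}, where all π_t^{(i)} ≥ 0, R^{(i)} ≥ 0, and μ_t^{(i)}, μ̂_t^{(i)} > 0 satisfy |μ̂_t^{(i)} − μ_t^{(i)}|/μ_t^{(i)} ≤ δ with δ ∈ [0,1). Then |V_IS(μ̂) − V_IS(μ)| ≤ max{(1/(1-δ))^H − 1, 1 − (1/(1+δ))^H} · V_IS(μ). -/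
open Finset

theorem stmt_2 (δ : ℝ) (hδ0 : 0 ≤ δ) (hδ1 : δ < 1) (n H : ℕ) (hn : 0 < n) (hH : 0 < H)
    (π : Fin n → Fin H → ℝ) (R : Fin n → ℝ)
    (μ μhat : Fin n → Fin H → ℝ)
    (hπ : ∀ i t, 0 ≤ π i t) (hR : ∀ i, 0 ≤ R i)
    (hμ : ∀ i t, 0 < μ i t) (hμhat : ∀ i t, 0 < μhat i t)
    (hrel : ∀ i t, |μhat i t - μ i t| / μ i t ≤ δ) :
    |(1 / n : ℝ) * ∑ i, (∏ t, π i t / μhat i t) * R i -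
        (1 / n : ℝ) * ∑ i, (∏ t, π i t / μ i t) * R i| ≤
      max ((1 / (1 - δ)) ^ H - 1) (1 - (1 / (1 + δ)) ^ H) *
        ((1 / n : ℝ) * ∑ i, (∏ t, π i t / μ i t) * R i) := by
  set M : ℝ := max ((1 / (1 - δ)) ^ H - 1) (1 - (1 / (1 + δ)) ^ H) with hM
  have h1δ : (0:ℝ) < 1 - δ := by linarith
  have h1δ' : (0:ℝ) < 1 + δ := by linarith
  have habs : ∀ i t, (1 - δ) * μ i t ≤ μhat i t ∧ μhat i t ≤ (1 + δ) * μ i t := by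
    intro i t
    have h := hrel i t
    have hμt := hμ i t
    rw [div_le_iff₀ hμt] at h
    have := abs_le.mp h
    constructor <;> nlinarith [this.1, this.2]
  -- per-trajectory bounds
  have key : ∀ i, |(∏ t, π i t / μhat i t) * R i - (∏ t, π i t / μ i t) * R i|
      ≤ M * ((∏ t, π i t / μ i t) * R i) := by
    intro i
    set P : ℝ := ∏ t, π i t / μ i t with hP
    set Q : ℝ := ∏ t, π i t / μhat i t with hQ
    have hPnn : 0 ≤ P := Finset.prod_nonneg fun t _ => div_nonneg (hπ i t) (hμ i t).le
    have hupper : Q ≤ (1 / (1 - δ)) ^ H * P := by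
      have : (1 / (1 - δ)) ^ H * P = ∏ t : Fin H, (1 / (1 - δ)) * (π i t / μ i t) := by
        rw [Finset.prod_mul_distrib, Finset.prod_const, Finset.card_univ, Fintype.card_fin]
      rw [this]
      apply Finset.prod_le_prod
      · intro t _; exact div_nonneg (hπ i t) (hμhat i t).le
      · intro t _
        have h1 : (1 - δ) * μ i t ≤ μhat i t := (habs i t).1
        have h2 : 0 < (1 - δ) * μ i t := mul_pos h1δ (hμ i t)
        have := div_le_div_of_nonneg_left (hπ i t) h2 h1
        calc π i t / μhat i t ≤ π i t / ((1 - δ) * μ i t) :=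
              div_le_div_of_nonneg_left (hπ i t) h2 h1
          _ = 1 / (1 - δ) * (π i t / μ i t) := by field_simp
    have hlower : (1 / (1 + δ)) ^ H * P ≤ Q := by
      have heq : (1 / (1 + δ)) ^ H * P = ∏ t : Fin H, (1 / (1 + δ)) * (π i t / μ i t) := by
        rw [Finset.prod_mul_distrib, Finset.prod_const, Finset.card_univ, Fintype.card_fin]
      rw [heq]
      apply Finset.prod_le_prod
      · intro t _
        exact mul_nonneg (by positivity) (div_nonneg (hπ i t) (hμ i t).le)
      · intro t _
        have h1 : μhat i t ≤ (1 + δ) * μ i t := (habs i t).2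
        have h2 : 0 < μhat i t := hμhat i t
        calc 1 / (1 + δ) * (π i t / μ i t) = π i t / ((1 + δ) * μ i t) := by
              field_simp
          _ ≤ π i t / μhat i t := div_le_div_of_nonneg_left (hπ i t) h2 h1
    have hM1 : (1 / (1 - δ)) ^ H - 1 ≤ M := le_max_left _ _
    have hM2 : 1 - (1 / (1 + δ)) ^ H ≤ M := le_max_right _ _
    rw [abs_sub_le_iff]
    have hRnn := hR i
    constructor
    · nlinarith [mul_le_mul_of_nonneg_right hupper hRnn,
        mul_le_mul_of_nonneg_right (mul_le_mul_of_nonneg_right hM1 hPnn) hRnn]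
    · nlinarith [mul_le_mul_of_nonneg_right hlower hRnn,
        mul_le_mul_of_nonneg_right (mul_le_mul_of_nonneg_right hM2 hPnn) hRnn]
  have hninv : (0:ℝ) ≤ 1 / n := by positivity
  have hsum : |∑ i, ((∏ t, π i t / μhat i t) * R i - (∏ t, π i t / μ i t) * R i)|
      ≤ M * ∑ i, (∏ t, π i t / μ i t) * R i := by
    calc |∑ i, ((∏ t, π i t / μhat i t) * R i - (∏ t, π i t / μ i t) * R i)|
        ≤ ∑ i, |(∏ t, π i t / μhat i t) * R i - (∏ t, π i t / μ i t) * R i| :=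
          Finset.abs_sum_le_sum_abs _ _
      _ ≤ ∑ i, M * ((∏ t, π i t / μ i t) * R i) := Finset.sum_le_sum fun i _ => key i
      _ = M * ∑ i, (∏ t, π i t / μ i t) * R i := by rw [← Finset.mul_sum]
  calc |(1 / n : ℝ) * ∑ i, (∏ t, π i t / μhat i t) * R i -
        (1 / n : ℝ) * ∑ i, (∏ t, π i t / μ i t) * R i|
      = (1 / n : ℝ) * |∑ i, ((∏ t, π i t / μhat i t) * R i - (∏ t, π i t / μ i t) * R i)| := by
        rw [← mul_sub, abs_mul, abs_of_nonneg hninv, Finset.sum_sub_distrib]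
    _ ≤ (1 / n : ℝ) * (M * ∑ i, (∏ t, π i t / μ i t) * R i) :=
        mul_le_mul_of_nonneg_left hsum hninv
    _ = M * ((1 / n : ℝ) * ∑ i, (∏ t, π i t / μ i t) * R i) := by ring
end

section
/- For any finite-horizon MDP M, model M̂, policy π, and horizon H, the value difference at the initial state satisfies: V_{M̂,H}^π(s) − V_{M,H}^π(s) = E_{π,M}[ Σ_{t=0}^{H−1} ( r̂(s_t,a_t) − r̄(s_t,a_t) + Σ_{s'} (T̂(s'|s_t,a_t) − T(s'|s_t,a_t)) V_{M̂,H−t−1}^π(s') ) | s_0 = s ], where the expectation is over trajectories generated by following π in the true MDP M. -/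
open Finset

/-- Finite-horizon value function of policy `π`, with `k` steps to go. -/
noncomputable def mdpVal {S A : Type*} [Fintype S] [Fintype A]
    (r : S → A → ℝ) (T : S → A → S → ℝ) (π : S → A → ℝ) : ℕ → S → ℝ
  | 0, _ => 0
  | k + 1, s => ∑ a, π s a * (r s a + ∑ s', T s a s' * mdpVal r T π k s')

/-- State distribution at step `t` when starting from `s₀` and following `π` in MDP `⟨r,T⟩`. -/
noncomputable def stateDist {S A : Type*} [Fintype S] [Fintype A] [DecidableEq S]
    (T : S → A → S → ℝ) (π : S → A → ℝ) (s₀ : S) : ℕ → S → ℝ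
  | 0, s => if s = s₀ then 1 else 0
  | t + 1, s' => ∑ s, ∑ a, stateDist T π s₀ t s * π s a * T s a s'

private lemma pull2 {ι κ μ ν : Type*} (X : Finset ι) (Y : Finset κ) (Z : Finset μ)
    (W : Finset ν) (f : ι → κ → μ → ν → ℝ) :
    ∑ x ∈ X, ∑ y ∈ Y, ∑ z ∈ Z, ∑ w ∈ W, f x y z w
      = ∑ z ∈ Z, ∑ w ∈ W, ∑ x ∈ X, ∑ y ∈ Y, f x y z w :=
  calc ∑ x ∈ X, ∑ y ∈ Y, ∑ z ∈ Z, ∑ w ∈ W, f x y z w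
      = ∑ x ∈ X, ∑ z ∈ Z, ∑ y ∈ Y, ∑ w ∈ W, f x y z w :=
        Finset.sum_congr rfl fun _ _ => Finset.sum_comm
    _ = ∑ z ∈ Z, ∑ x ∈ X, ∑ y ∈ Y, ∑ w ∈ W, f x y z w := Finset.sum_comm
    _ = ∑ z ∈ Z, ∑ x ∈ X, ∑ w ∈ W, ∑ y ∈ Y, f x y z w :=
        Finset.sum_congr rfl fun _ _ => Finset.sum_congr rfl fun _ _ => Finset.sum_comm
    _ = ∑ z ∈ Z, ∑ w ∈ W, ∑ x ∈ X, ∑ y ∈ Y, f x y z w :=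
        Finset.sum_congr rfl fun _ _ => Finset.sum_comm

private lemma pull2of3 {ι κ μ ν ρ : Type*} (X : Finset ι) (Y : Finset κ) (Z : Finset μ)
    (U : Finset ν) (V : Finset ρ) (f : ι → κ → μ → ν → ρ → ℝ) :
    ∑ x ∈ X, ∑ y ∈ Y, ∑ z ∈ Z, ∑ u ∈ U, ∑ v ∈ V, f x y z u v
      = ∑ u ∈ U, ∑ v ∈ V, ∑ x ∈ X, ∑ y ∈ Y, ∑ z ∈ Z, f x y z u v := by
  have h1 : ∀ x y, (∑ z ∈ Z, ∑ u ∈ U, ∑ v ∈ V, f x y z u v)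
      = ∑ u ∈ U, ∑ v ∈ V, ∑ z ∈ Z, f x y z u v := fun x y => by
    refine Finset.sum_comm.trans ?_
    exact Finset.sum_congr rfl fun u _ => Finset.sum_comm
  simp only [h1]
  exact pull2 X Y U V fun x y u v => ∑ z ∈ Z, f x y z u v

lemma dist_shift {S A : Type*} [Fintype S] [Fintype A] [DecidableEq S]
    (T : S → A → S → ℝ) (π : S → A → ℝ) (s₀ : S) (t : ℕ) (x : S) :
    stateDist T π s₀ (t + 1) x
      = ∑ s₁, ∑ a, π s₀ a * T s₀ a s₁ * stateDist T π s₁ t x := by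
  induction t generalizing x with
  | zero =>
    show (∑ s', ∑ a, (if s' = s₀ then (1:ℝ) else 0) * π s' a * T s' a x) = _
    simp [stateDist, Finset.sum_ite_eq, Finset.sum_ite_eq']
  | succ t ih =>
    show (∑ s', ∑ a, stateDist T π s₀ (t+1) s' * π s' a * T s' a x) = _
    have h : ∀ s₁, stateDist T π s₁ (t+1) x
        = ∑ s', ∑ a, stateDist T π s₁ t s' * π s' a * T s' a x := fun s₁ => rfl
    simp only [h, ih]
    conv_lhs => rw [Finset.sum_comm]
    simp only [Finset.sum_mul, Finset.mul_sum]
    rw [pull2]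
    refine Finset.sum_congr rfl fun s₁ _ => Finset.sum_congr rfl fun a _ => ?_
    refine Finset.sum_comm.trans ?_
    exact Finset.sum_congr rfl fun s' _ => Finset.sum_congr rfl fun a' _ => by ring

theorem stmt_11 {S A : Type*} [Fintype S] [Fintype A] [DecidableEq S]
    (r rhat : S → A → ℝ) (T That : S → A → S → ℝ) (π : S → A → ℝ) (H : ℕ) (s : S) :
    mdpVal rhat That π H s - mdpVal r T π H s =
      ∑ t ∈ Finset.range H, ∑ st, ∑ a,
        stateDist T π s t st * π st a *
          ((rhat st a - r st a)
            + ∑ s', (That st a s' - T st a s') * mdpVal rhat That π (H - t - 1) s') := by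
  induction H generalizing s with
  | zero => simp [mdpVal]
  | succ H ih =>
    rw [Finset.sum_range_succ']
    have h0 : (∑ st, ∑ a, stateDist T π s 0 st * π st a *
        ((rhat st a - r st a)
          + ∑ s', (That st a s' - T st a s') * mdpVal rhat That π (H + 1 - 0 - 1) s'))
        = ∑ a, π s a * ((rhat s a - r s a)
          + ∑ s', (That s a s' - T s a s') * mdpVal rhat That π H s') := by
      simp [stateDist, Finset.sum_ite_eq]
    rw [h0]
    have hshift : (∑ t ∈ Finset.range H, ∑ st, ∑ a,
        stateDist T π s (t + 1) st * π st a *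
          ((rhat st a - r st a)
            + ∑ s', (That st a s' - T st a s') * mdpVal rhat That π (H + 1 - (t+1) - 1) s'))
        = ∑ s₁, ∑ a₀, π s a₀ * T s a₀ s₁ *
            (mdpVal rhat That π H s₁ - mdpVal r T π H s₁) := by
      have he : ∀ t, H + 1 - (t + 1) - 1 = H - t - 1 := by omega
      simp only [dist_shift, he, Finset.sum_mul]
      rw [pull2of3]
      simp only [ih, Finset.mul_sum]
      refine Finset.sum_congr rfl fun s₁ _ => Finset.sum_congr rfl fun a₀ _ => ?_
      refine Finset.sum_congr rfl fun t _ => Finset.sum_congr rfl fun st _ => ?_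
      exact Finset.sum_congr rfl fun a _ => by ring
    rw [hshift]
    show (∑ a, π s a * (rhat s a + ∑ s', That s a s' * mdpVal rhat That π H s'))
        - (∑ a, π s a * (r s a + ∑ s', T s a s' * mdpVal r T π H s')) = _
    conv_rhs => rw [Finset.sum_comm]
    rw [← Finset.sum_sub_distrib, ← Finset.sum_add_distrib]
    refine Finset.sum_congr rfl fun a _ => ?_
    have hsum : (∑ s', π s a * (That s a s' * mdpVal rhat That π H s'))
        - (∑ s', π s a * (T s a s' * mdpVal r T π H s'))
        = (∑ s₁, π s a * T s a s₁ * (mdpVal rhat That π H s₁ - mdpVal r T π H s₁))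
          + ∑ s', π s a * ((That s a s' - T s a s') * mdpVal rhat That π H s') := by
      rw [← Finset.sum_sub_distrib, ← Finset.sum_add_distrib]
      exact Finset.sum_congr rfl fun s' _ => by ring
    simp only [mul_add, mul_sub, Finset.mul_sum] at hsum ⊢
    linarith [hsum]
end

section
/- Let p be a probability density on a state space S conditioned on an event, decomposed as p(s) = c·p₁(s) + (1−c)·p₂(s) with c ∈ [0,1] and p₁, p₂ probability densities (the factual and counterfactual conditional distributions). For any integrable f : S → ℝ and any B > 0 and function class G with (1/B)(f∘ψ) ∈ G, we have ∫ f p ds ≤ ∫ f p₁ ds + (1−c)·B·IPM_G(p₁^φ, p₂^φ) ≤ ∫ f p₁ ds + B·IPM_G(p₁^φ, p₂^φ), where p₁^φ, p₂^φ are the corresponding representation-space densities under an invertible representation φ with inverse ψ. -/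
open MeasureTheory

theorem stmt_15 {S Z : Type*} [MeasurableSpace S] [MeasurableSpace Z]
    (νS : Measure S) (νZ : Measure Z)
    (c : ℝ) (hc0 : 0 ≤ c) (hc1 : c ≤ 1)
    (p p₁ p₂ : S → ℝ) (hp : p = fun s => c * p₁ s + (1 - c) * p₂ s)
    (p₁φ p₂φ : Z → ℝ) (f : S → ℝ) (ψ : Z → S)
    (hpush : ∫ s, f s * (p₁ s - p₂ s) ∂νS = ∫ z, f (ψ z) * (p₁φ z - p₂φ z) ∂νZ)
    (hint₁ : Integrable (fun s => f s * p₁ s) νS)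
    (hint₂ : Integrable (fun s => f s * p₂ s) νS)
    (B : ℝ) (hB : 0 < B) (G : Set (Z → ℝ))
    (hG : (fun z => f (ψ z) / B) ∈ G)
    (hbdd : BddAbove ((fun g => |∫ z, g z * (p₁φ z - p₂φ z) ∂νZ|) '' G)) :
    ∫ s, f s * p s ∂νS ≤
        (∫ s, f s * p₁ s ∂νS) +
          (1 - c) * B * sSup ((fun g => |∫ z, g z * (p₁φ z - p₂φ z) ∂νZ|) '' G) ∧
      (∫ s, f s * p₁ s ∂νS) +
          (1 - c) * B * sSup ((fun g => |∫ z, g z * (p₁φ z - p₂φ z) ∂νZ|) '' G) ≤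
        (∫ s, f s * p₁ s ∂νS) +
          B * sSup ((fun g => |∫ z, g z * (p₁φ z - p₂φ z) ∂νZ|) '' G) := by
  set M := sSup ((fun g => |∫ z, g z * (p₁φ z - p₂φ z) ∂νZ|) '' G) with hM
  set D := ∫ s, f s * (p₁ s - p₂ s) ∂νS with hD
  have hmem : |∫ z, (f (ψ z) / B) * (p₁φ z - p₂φ z) ∂νZ| ≤ M :=
    le_csSup hbdd ⟨_, hG, rfl⟩
  have hM0 : 0 ≤ M := le_trans (abs_nonneg _) hmem
  have heq : ∫ z, (f (ψ z) / B) * (p₁φ z - p₂φ z) ∂νZ = D / B := by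
    rw [hpush, div_eq_mul_inv, ← integral_mul_const]
    congr 1; ext z; ring
  rw [heq, abs_div, abs_of_pos hB, div_le_iff₀ hB] at hmem
  -- hmem : |D| ≤ M * B
  have hDval : ∫ s, f s * p s ∂νS = (∫ s, f s * p₁ s ∂νS) - (1 - c) * D := by
    have h1 : (fun s => f s * p s) =
        fun s => c * (f s * p₁ s) + (1 - c) * (f s * p₂ s) := by
      subst hp; ext s; ring
    have h2 : D = (∫ s, f s * p₁ s ∂νS) - ∫ s, f s * p₂ s ∂νS := by
      rw [hD, ← integral_sub hint₁ hint₂]; congr 1; ext s; ring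
    rw [h1, integral_add (hint₁.const_mul c) (hint₂.const_mul (1 - c)),
      integral_const_mul, integral_const_mul, h2]
    ring
  constructor
  · rw [hDval]
    nlinarith [neg_abs_le D, sub_nonneg.mpr hc1]
  · nlinarith [mul_nonneg hc0 (mul_nonneg hB.le hM0)]
end
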